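/- arXiv:math/0312493 — 5 statements merged into one kernel-verified Lean document; each statement's English description precedes it below -/
import Mathlib

section
/- If S is a cancellative semigroup satisfying the left Ore condition, then its group of fractions is unique: if G₁ and G₂ are groups each containing S (via injective semigroup homomorphisms) and each generated as a group by the image of S, with every element expressible as a fraction s⁻¹t of elements of S, then there is a group isomorphism G₁ → G₂ restricting to the identity on S. -/
/-- Equality of fractions transfers between two groups containing `S`. -/
lemma frac_transfer {S G₁ G₂ : Type*} [Semigroup S] [Group G₁] [Group G₂]
    (hore : ∀ a b : S, ∃ x y : S, x * a = y * b)
    (ι₁ : S → G₁) (ι₂ : S → G₂)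
    (h₁hom : ∀ a b : S, ι₁ (a * b) = ι₁ a * ι₁ b) (h₁inj : Function.Injective ι₁)
    (h₂hom : ∀ a b : S, ι₂ (a * b) = ι₂ a * ι₂ b)
    (s t u v : S) (h : (ι₁ s)⁻¹ * ι₁ t = (ι₁ u)⁻¹ * ι₁ v) :
    (ι₂ s)⁻¹ * ι₂ t = (ι₂ u)⁻¹ * ι₂ v := by
  obtain ⟨x, y, hxy⟩ := hore s u
  have hx1 : ι₁ x * ι₁ s = ι₁ y * ι₁ u := by rw [← h₁hom, ← h₁hom, hxy]
  have htv : x * t = y * v := by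
    apply h₁inj
    rw [h₁hom, h₁hom]
    have ht : ι₁ t = ι₁ s * ((ι₁ u)⁻¹ * ι₁ v) := by rw [← h]; group
    rw [ht, ← mul_assoc, ← mul_assoc, hx1]
    group
  have hx2 : ι₂ x * ι₂ s = ι₂ y * ι₂ u := by rw [← h₂hom, ← h₂hom, hxy]
  have ht2 : ι₂ x * ι₂ t = ι₂ y * ι₂ v := by rw [← h₂hom, ← h₂hom, htv]
  calc (ι₂ s)⁻¹ * ι₂ t = (ι₂ x * ι₂ s)⁻¹ * (ι₂ x * ι₂ t) := by group
    _ = (ι₂ y * ι₂ u)⁻¹ * (ι₂ y * ι₂ v) := by rw [hx2, ht2]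
    _ = (ι₂ u)⁻¹ * ι₂ v := by group

/-- Uniqueness of the group of fractions of a cancellative semigroup with the left
Ore condition. -/
theorem group_of_fractions_unique (S : Type*) [Semigroup S]
    (hcancel : ∀ a b x : S, (x * a = x * b → a = b) ∧ (a * x = b * x → a = b))
    (hore : ∀ a b : S, ∃ x y : S, x * a = y * b)
    (G₁ G₂ : Type*) [Group G₁] [Group G₂] (ι₁ : S → G₁) (ι₂ : S → G₂)
    (h₁hom : ∀ a b : S, ι₁ (a * b) = ι₁ a * ι₁ b) (h₁inj : Function.Injective ι₁)
    (h₁gen : Subgroup.closure (Set.range ι₁) = ⊤)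
    (h₁frac : ∀ g : G₁, ∃ s t : S, g = (ι₁ s)⁻¹ * ι₁ t)
    (h₂hom : ∀ a b : S, ι₂ (a * b) = ι₂ a * ι₂ b) (h₂inj : Function.Injective ι₂)
    (h₂gen : Subgroup.closure (Set.range ι₂) = ⊤)
    (h₂frac : ∀ g : G₂, ∃ s t : S, g = (ι₂ s)⁻¹ * ι₂ t) :
    ∃ φ : G₁ ≃* G₂, ∀ s : S, φ (ι₁ s) = ι₂ s := by
  classical
  obtain ⟨σ, τ, hστ⟩ : ∃ σ τ : G₁ → S, ∀ g, g = (ι₁ (σ g))⁻¹ * ι₁ (τ g) := by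
    choose σ τ h using h₁frac; exact ⟨σ, τ, h⟩
  obtain ⟨σ', τ', hσ'τ'⟩ : ∃ σ' τ' : G₂ → S, ∀ g, g = (ι₂ (σ' g))⁻¹ * ι₂ (τ' g) := by
    choose σ' τ' h using h₂frac; exact ⟨σ', τ', h⟩
  set f : G₁ → G₂ := fun g => (ι₂ (σ g))⁻¹ * ι₂ (τ g) with hf
  set f' : G₂ → G₁ := fun g => (ι₁ (σ' g))⁻¹ * ι₁ (τ' g) with hf'
  -- f applied to an explicit fraction
  have hA : ∀ (s t : S), f ((ι₁ s)⁻¹ * ι₁ t) = (ι₂ s)⁻¹ * ι₂ t := by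
    intro s t
    have heq : (ι₁ (σ ((ι₁ s)⁻¹ * ι₁ t)))⁻¹ * ι₁ (τ ((ι₁ s)⁻¹ * ι₁ t))
        = (ι₁ s)⁻¹ * ι₁ t := (hστ _).symm
    exact frac_transfer hore ι₁ ι₂ h₁hom h₁inj h₂hom _ _ s t heq
  have hB : ∀ (s t : S), f' ((ι₂ s)⁻¹ * ι₂ t) = (ι₁ s)⁻¹ * ι₁ t := by
    intro s t
    have heq : (ι₂ (σ' ((ι₂ s)⁻¹ * ι₂ t)))⁻¹ * ι₂ (τ' ((ι₂ s)⁻¹ * ι₂ t))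
        = (ι₂ s)⁻¹ * ι₂ t := (hσ'τ' _).symm
    exact frac_transfer hore ι₂ ι₁ h₂hom h₂inj h₁hom _ _ s t heq
  have hleft : Function.LeftInverse f' f := by
    intro g
    have : f g = (ι₂ (σ g))⁻¹ * ι₂ (τ g) := rfl
    rw [this, hB, ← hστ]
  have hright : Function.RightInverse f' f := by
    intro g
    have : f' g = (ι₁ (σ' g))⁻¹ * ι₁ (τ' g) := rfl
    rw [this, hA, ← hσ'τ']
  have hmul : ∀ g h : G₁, f (g * h) = f g * f h := by
    intro g h
    obtain ⟨x, y, hxy⟩ := hore (τ g) (σ h)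
    have hx1 : ι₁ x * ι₁ (τ g) = ι₁ y * ι₁ (σ h) := by rw [← h₁hom, ← h₁hom, hxy]
    have hx2 : ι₂ x * ι₂ (τ g) = ι₂ y * ι₂ (σ h) := by rw [← h₂hom, ← h₂hom, hxy]
    have hgh : g * h = (ι₁ (x * σ g))⁻¹ * ι₁ (y * τ h) := by
      conv_lhs => rw [hστ g, hστ h]
      rw [h₁hom, h₁hom]
      have : ι₁ (τ g) * (ι₁ (σ h))⁻¹ = (ι₁ x)⁻¹ * ι₁ y := by
        rw [eq_comm, inv_mul_eq_iff_eq_mul, ← mul_assoc, hx1]; group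
      calc (ι₁ (σ g))⁻¹ * ι₁ (τ g) * ((ι₁ (σ h))⁻¹ * ι₁ (τ h))
          = (ι₁ (σ g))⁻¹ * (ι₁ (τ g) * (ι₁ (σ h))⁻¹) * ι₁ (τ h) := by group
        _ = (ι₁ (σ g))⁻¹ * ((ι₁ x)⁻¹ * ι₁ y) * ι₁ (τ h) := by rw [this]
        _ = (ι₁ x * ι₁ (σ g))⁻¹ * (ι₁ y * ι₁ (τ h)) := by group
    have hgh2 : (ι₂ (x * σ g))⁻¹ * ι₂ (y * τ h)
        = ((ι₂ (σ g))⁻¹ * ι₂ (τ g)) * ((ι₂ (σ h))⁻¹ * ι₂ (τ h)) := by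
      rw [h₂hom, h₂hom]
      have : ι₂ (τ g) * (ι₂ (σ h))⁻¹ = (ι₂ x)⁻¹ * ι₂ y := by
        rw [eq_comm, inv_mul_eq_iff_eq_mul, ← mul_assoc, hx2]; group
      calc (ι₂ x * ι₂ (σ g))⁻¹ * (ι₂ y * ι₂ (τ h))
          = (ι₂ (σ g))⁻¹ * ((ι₂ x)⁻¹ * ι₂ y) * ι₂ (τ h) := by group
        _ = (ι₂ (σ g))⁻¹ * (ι₂ (τ g) * (ι₂ (σ h))⁻¹) * ι₂ (τ h) := by rw [this]
        _ = (ι₂ (σ g))⁻¹ * ι₂ (τ g) * ((ι₂ (σ h))⁻¹ * ι₂ (τ h)) := by group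
    rw [hgh, hA, hgh2]
  refine ⟨⟨⟨f, f', hleft, hright⟩, hmul⟩, ?_⟩
  intro s
  have hs : ι₁ s = (ι₁ s)⁻¹ * ι₁ (s * s) := by rw [h₁hom]; group
  show f (ι₁ s) = ι₂ s
  rw [hs, hA, h₂hom]
  group
end

section
/- If a cancellative semigroup S satisfies a nontrivial semigroup identity u(x₁,…,x_k) ≡ v(x₁,…,x_k) (where u and v are distinct positive words), then S satisfies the left Ore condition: for all a, b ∈ S there exist x, y ∈ S with xa = yb. -/
private lemma ore_list_diff {α : Type*} : ∀ (A B : List α), A ≠ B →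
    (∃ (T A' B' : List α) (x y : α), A = T ++ x :: A' ∧ B = T ++ y :: B' ∧ x ≠ y)
    ∨ (∃ R, R ≠ [] ∧ A = B ++ R) ∨ (∃ R, R ≠ [] ∧ B = A ++ R)
  | [], [], h => absurd rfl h
  | [], b :: B, _ => Or.inr (Or.inr ⟨b :: B, by simp⟩)
  | a :: A, [], _ => Or.inr (Or.inl ⟨a :: A, by simp⟩)
  | a :: A, b :: B, h => by
    by_cases hab : a = b
    · subst hab
      have hAB : A ≠ B := fun hh => h (by rw [hh])
      rcases ore_list_diff A B hAB with ⟨T, A', B', x, y, h1, h2, hxy⟩ | ⟨R, hR, hE⟩ | ⟨R, hR, hE⟩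
      · exact Or.inl ⟨a :: T, A', B', x, y, by simp [h1], by simp [h2], hxy⟩
      · exact Or.inr (Or.inl ⟨R, hR, by simp [hE]⟩)
      · exact Or.inr (Or.inr ⟨R, hR, by simp [hE]⟩)
    · exact Or.inl ⟨[], A, B, a, b, rfl, rfl, hab⟩

private lemma ore_list_diff_suffix {α : Type*} (A B : List α) (h : A ≠ B) :
    (∃ (T A' B' : List α) (x y : α), A = A' ++ x :: T ∧ B = B' ++ y :: T ∧ x ≠ y)
    ∨ (∃ R, R ≠ [] ∧ A = R ++ B) ∨ (∃ R, R ≠ [] ∧ B = R ++ A) := by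
  have h' : A.reverse ≠ B.reverse := fun hh => h (by simpa using congrArg List.reverse hh)
  rcases ore_list_diff _ _ h' with ⟨T, A', B', x, y, h1, h2, hxy⟩ | ⟨R, hR, hE⟩ | ⟨R, hR, hE⟩
  · refine Or.inl ⟨T.reverse, A'.reverse, B'.reverse, x, y, ?_, ?_, hxy⟩
    · have := congrArg List.reverse h1; simpa using this
    · have := congrArg List.reverse h2; simpa using this
  · refine Or.inr (Or.inl ⟨R.reverse, by simpa using hR, ?_⟩)
    have := congrArg List.reverse hE; simpa using this
  · refine Or.inr (Or.inr ⟨R.reverse, by simpa using hR, ?_⟩)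
    have := congrArg List.reverse hE; simpa using this

private lemma ore_foldl_assoc {S : Type*} [Semigroup S] {α : Type*} (f : α → S) :
    ∀ (l : List α) (a c : S),
      l.foldl (fun s i => s * f i) (a * c) = a * l.foldl (fun s i => s * f i) c
  | [], _, _ => rfl
  | i :: l, a, c => by
    simp only [List.foldl_cons, mul_assoc]
    exact ore_foldl_assoc f l a (c * f i)

private lemma ore_foldl_cancel {S : Type*} [Semigroup S] {α : Type*} (f : α → S)
    (hc : ∀ a b x : S, a * x = b * x → a = b) :
    ∀ (l : List α) (r s : S),
      l.foldl (fun s i => s * f i) r = l.foldl (fun s i => s * f i) s → r = s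
  | [], _, _, h => h
  | i :: l, r, s, h => hc _ _ _ (ore_foldl_cancel f hc l _ _ h)

private lemma ore_foldl_last {S : Type*} [Semigroup S] {α : Type*} (t : S) :
    ∀ (l : List α) (c : S), l ≠ [] → ∃ q : S, l.foldl (fun s _ => s * t) c = q * t
  | [], _, h => absurd rfl h
  | [_], c, _ => ⟨c, rfl⟩
  | _ :: j :: l, c, _ => ore_foldl_last t (j :: l) (c * t) (by simp)

/-- A cancellative semigroup satisfying a nontrivial semigroup identity satisfies
the left Ore condition. -/
theorem cancellative_with_identity_leftOre (S : Type*) [Semigroup S]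
    (hcancel : ∀ a b x : S, (x * a = x * b → a = b) ∧ (a * x = b * x → a = b))
    (k : ℕ) (u v : FreeSemigroup (Fin k)) (huv : u ≠ v)
    (hid : ∀ f : Fin k → S, FreeSemigroup.lift f u = FreeSemigroup.lift f v) :
    ∀ a b : S, ∃ x y : S, x * a = y * b := by
  intro a b
  have hrc : ∀ a b x : S, a * x = b * x → a = b := fun a b x h => (hcancel a b x).2 h
  have hLne : (u.head :: u.tail) ≠ (v.head :: v.tail) := by
    intro h
    apply huv
    injection h with h1 h2
    exact FreeSemigroup.ext h1 h2
  have key : ∀ f : Fin k → S,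
      (u.head :: u.tail).foldl (fun s i => s * f i) a
        = (v.head :: v.tail).foldl (fun s i => s * f i) a := by
    intro f
    have h1 : (u.head :: u.tail).foldl (fun s i => s * f i) a
        = a * FreeSemigroup.lift f u := by
      show u.tail.foldl (fun s i => s * f i) (a * f u.head) = _
      rw [ore_foldl_assoc]
      rfl
    have h2 : (v.head :: v.tail).foldl (fun s i => s * f i) a
        = a * FreeSemigroup.lift f v := by
      show v.tail.foldl (fun s i => s * f i) (a * f v.head) = _
      rw [ore_foldl_assoc]
      rfl
    rw [h1, h2, hid f]
  rcases ore_list_diff_suffix _ _ hLne with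
      ⟨T, A', B', x, y, h1, h2, hxy⟩ | ⟨R, hR, hE⟩ | ⟨R, hR, hE⟩
  · -- the words differ with a common suffix T
    set f : Fin k → S := fun i => if i = x then a else b with hf
    have hk := key f
    rw [h1, h2, List.foldl_append, List.foldl_append, List.foldl_cons, List.foldl_cons] at hk
    have hcan := ore_foldl_cancel f hrc T _ _ hk
    have hfx : f x = a := if_pos rfl
    have hfy : f y = b := if_neg (fun h => hxy h.symm)
    exact ⟨_, _, by rw [← hfx, ← hfy]; exact hcan⟩
  · -- u's word is v's word with a nonempty prefix R
    have main : ∀ t : S, ∃ q : S, q * t = a := by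
      intro t
      have hk := key (fun _ => t)
      rw [hE, List.foldl_append] at hk
      have h3 := ore_foldl_cancel (fun _ => t) hrc _ _ _ hk
      rcases ore_foldl_last t R a hR with ⟨q, hq⟩
      exact ⟨q, by rw [← hq]; exact h3⟩
    rcases main a with ⟨x, hx⟩
    rcases main b with ⟨y, hy⟩
    exact ⟨x, y, by rw [hx, hy]⟩
  · -- symmetric case
    have main : ∀ t : S, ∃ q : S, q * t = a := by
      intro t
      have hk := (key (fun _ => t)).symm
      rw [hE, List.foldl_append] at hk
      have h3 := ore_foldl_cancel (fun _ => t) hrc _ _ _ hk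
      rcases ore_foldl_last t R a hR with ⟨q, hq⟩
      exact ⟨q, by rw [← hq]; exact h3⟩
    rcases main a with ⟨x, hx⟩
    rcases main b with ⟨y, hy⟩
    exact ⟨x, y, by rw [hx, hy]⟩
end

section
/- A group K is nilpotent of class at most n if and only if the Mal'tsev identity X_n ≡ Y_n holds in K, where X₀ = x, Y₀ = y, X_{n+1} = X_n u_{n+1} Y_n, Y_{n+1} = Y_n u_{n+1} X_n. -/
/-- Mal'tsev's pair of words `(X_n, Y_n)`, evaluated in a group:
`X₀ = x`, `Y₀ = y`, `X_{n+1} = X_n u_{n+1} Y_n`, `Y_{n+1} = Y_n u_{n+1} X_n`. -/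
def maltsevPair {G : Type*} [Group G] (x y : G) (u : ℕ → G) : ℕ → G × G
  | 0 => (x, y)
  | n + 1 =>
      ((maltsevPair x y u n).1 * u (n + 1) * (maltsevPair x y u n).2,
       (maltsevPair x y u n).2 * u (n + 1) * (maltsevPair x y u n).1)

lemma maltsevPair_map {G H : Type*} [Group G] [Group H] (f : G →* H) (x y : G) (u : ℕ → G)
    (n : ℕ) : maltsevPair (f x) (f y) (f ∘ u) n =
      (f (maltsevPair x y u n).1, f (maltsevPair x y u n).2) := by
  induction n with
  | zero => rfl
  | succ n ih => simp [maltsevPair, ih]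

lemma maltsevPair_congr {G : Type*} [Group G] (x y : G) (u v : ℕ → G)
    (n : ℕ) (h : ∀ i ≤ n, u i = v i) : maltsevPair x y u n = maltsevPair x y v n := by
  induction n with
  | zero => rfl
  | succ n ih =>
      have h1 : ∀ i ≤ n, u i = v i := fun i hi => h i (hi.trans n.le_succ)
      simp [maltsevPair, ih h1, h (n+1) le_rfl]

open scoped commutatorElement in
lemma maltsev_mem_lcs {G : Type*} [Group G] (n : ℕ) (x y : G) (u : ℕ → G) :
    (maltsevPair x y u n).1 * (maltsevPair x y u n).2⁻¹ ∈ (⊤ : Subgroup G).lowerCentralSeries n := by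
  induction n generalizing x y with
  | zero => exact Subgroup.mem_top _
  | succ n ih =>
      set a := (maltsevPair x y u n).1
      set b := (maltsevPair x y u n).2
      set c := u (n+1)
      set g := a * b⁻¹ with hg
      have hgmem : g ∈ (⊤ : Subgroup G).lowerCentralSeries n := ih x y
      have key : (maltsevPair x y u (n+1)).1 * (maltsevPair x y u (n+1)).2⁻¹ =
          g * (b * ⁅g⁻¹, c⁆⁻¹ * b⁻¹) * g⁻¹ * ⁅g, b⁆ := by
        show a * c * b * (b * c * a)⁻¹ = _
        rw [commutatorElement_def, commutatorElement_def, hg]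
        group
      rw [key]
      have h1 : ⁅g⁻¹, c⁆ ∈ (⊤ : Subgroup G).lowerCentralSeries (n+1) :=
        Subgroup.commutator_mem_commutator (inv_mem hgmem) (Subgroup.mem_top c)
      have h2 : ⁅g, b⁆ ∈ (⊤ : Subgroup G).lowerCentralSeries (n+1) :=
        Subgroup.commutator_mem_commutator hgmem (Subgroup.mem_top b)
      have hN : ((⊤ : Subgroup G).lowerCentralSeries (n+1)).Normal := Subgroup.lowerCentralSeries_normal ⊤ (n+1)
      exact mul_mem (hN.conj_mem _ (hN.conj_mem _ (inv_mem h1) b) g) h2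

/-- A group is nilpotent of class at most `n` iff the Mal'tsev identity `X_n ≡ Y_n`
holds in it. -/
theorem nilpotent_iff_maltsev (G : Type*) [Group G] (n : ℕ) :
    (⊤ : Subgroup G).lowerCentralSeries n = ⊥ ↔
      ∀ (x y : G) (u : ℕ → G), (maltsevPair x y u n).1 = (maltsevPair x y u n).2 := by
  constructor
  · intro h x y u
    have := maltsev_mem_lcs n x y u
    rw [h, Subgroup.mem_bot, mul_inv_eq_one] at this
    exact this
  · induction n generalizing G with
    | zero =>
        intro h
        rw [eq_bot_iff]
        intro g _
        simpa [maltsevPair] using h g 1 (fun _ => 1)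
    | succ n ih =>
        intro h
        -- first: for all x y u, X_n * Y_n⁻¹ ∈ center G
        have hcen : ∀ (x y : G) (u : ℕ → G),
            (maltsevPair x y u n).1 * (maltsevPair x y u n).2⁻¹ ∈ Subgroup.center G := by
          intro x y u
          rw [Subgroup.mem_center_iff]
          intro c
          set v : ℕ → G := fun i => if i = n + 1 then c else u i with hv
          have hagree : maltsevPair x y v n = maltsevPair x y u n := by
            apply maltsevPair_congr
            intro i hi
            simp [hv, Nat.ne_of_lt (Nat.lt_succ_of_le hi)]
          have h2 := h x y v
          simp only [maltsevPair, hagree] at h2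
          have hvn : v (n+1) = c := by simp [hv]
          rw [hvn] at h2
          -- h2 : X * c * Y = Y * c * X
          set a := (maltsevPair x y u n).1
          set b := (maltsevPair x y u n).2
          -- want : c * (a * b⁻¹) = (a * b⁻¹) * c
          have h3 : b⁻¹ * a * c = c * a * b⁻¹ := by
            have := h2
            calc b⁻¹ * a * c = b⁻¹ * (a * c * b) * b⁻¹ := by group
            _ = b⁻¹ * (b * c * a) * b⁻¹ := by rw [h2]
            _ = c * a * b⁻¹ := by group
          have h4 : b⁻¹ * a = a * b⁻¹ := by
            have hc1 : ∀ c : G, b⁻¹ * a * c = c * (a * b⁻¹) := by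
              intro c'
              set v' : ℕ → G := fun i => if i = n + 1 then c' else u i with hv'
              have hagree' : maltsevPair x y v' n = maltsevPair x y u n := by
                apply maltsevPair_congr
                intro i hi
                simp [hv', Nat.ne_of_lt (Nat.lt_succ_of_le hi)]
              have h2' := h x y v'
              simp only [maltsevPair, hagree'] at h2'
              have hvn' : v' (n+1) = c' := by simp [hv']
              rw [hvn'] at h2'
              calc b⁻¹ * a * c' = b⁻¹ * (a * c' * b) * b⁻¹ := by group
              _ = b⁻¹ * (b * c' * a) * b⁻¹ := by rw [h2']
              _ = c' * (a * b⁻¹) := by group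
            simpa using hc1 1
          calc c * (a * b⁻¹) = c * a * b⁻¹ := by rw [mul_assoc]
          _ = b⁻¹ * a * c := h3.symm
          _ = (a * b⁻¹) * c := by rw [h4]
        -- identity X_n ≡ Y_n holds in G / center G
        set Q := G ⧸ Subgroup.center G
        have hQ : ∀ (x y : Q) (u : ℕ → Q),
            (maltsevPair x y u n).1 = (maltsevPair x y u n).2 := by
          intro x y u
          obtain ⟨x', rfl⟩ := QuotientGroup.mk'_surjective (Subgroup.center G) x
          obtain ⟨y', rfl⟩ := QuotientGroup.mk'_surjective (Subgroup.center G) y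
          choose u' hu' using fun i => QuotientGroup.mk'_surjective (Subgroup.center G) (u i)
          have hu : u = (QuotientGroup.mk' (Subgroup.center G)) ∘ u' := by
            funext i; exact (hu' i).symm
          rw [hu, maltsevPair_map]
          have hz := hcen x' y' u'
          set A := (maltsevPair x' y' u' n).1
          set B := (maltsevPair x' y' u' n).2
          have hmem : A⁻¹ * B ∈ Subgroup.center G := by
            have h2 := (Subgroup.center G).normal_of_characteristic.conj_mem _
              ((Subgroup.center G).inv_mem hz) A⁻¹
            convert h2 using 1
            group
          simp only [QuotientGroup.mk'_apply]
          exact QuotientGroup.eq.mpr hmem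
        have hQbot : (⊤ : Subgroup Q).lowerCentralSeries n = ⊥ := ih Q hQ
        apply Subgroup.lowerCentralSeries_succ_eq_bot ⊤
        intro g hg
        have : QuotientGroup.mk' (Subgroup.center G) g ∈ (⊤ : Subgroup Q).lowerCentralSeries n :=
          Subgroup.lowerCentralSeries.map (QuotientGroup.mk' (Subgroup.center G)) n ⟨g, hg, rfl⟩
        rw [hQbot, Subgroup.mem_bot] at this
        rwa [← QuotientGroup.ker_mk' (Subgroup.center G), MonoidHom.mem_ker]
end

section
/- In the free group F of rank 2 with basis {a₁, a₂}, the elements V₁ = a₁a₂⁻¹a₁ and V₂ = a₂a₁⁻¹a₂ generate a free subgroup of rank 2. -/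
lemma head_cons_mul (x : Fin 2 × Bool) (g : FreeGroup (Fin 2))
    (h : g.toWord.head? ≠ some (x.1, !x.2)) :
    (FreeGroup.mk [x] * g).toWord = x :: g.toWord := by
  conv_lhs => rw [← FreeGroup.mk_toWord (x := g), FreeGroup.mul_mk]
  show (FreeGroup.mk (x :: g.toWord)).toWord = _
  rw [FreeGroup.toWord_mk, FreeGroup.reduce.cons, FreeGroup.reduce_toWord]
  rcases hw : g.toWord with _ | ⟨⟨a, b⟩, tl⟩
  · rfl
  · have : ¬ (x.1 = a ∧ x.2 = !b) := by
      rintro ⟨h1, h2⟩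
      exact h (by simp [hw, ← h1, h2])
    simp [this]

lemma head?_cons_mul (x : Fin 2 × Bool) (g : FreeGroup (Fin 2))
    (h : g.toWord.head? ≠ some (x.1, !x.2)) :
    (FreeGroup.mk [x] * g).toWord.head? = some x := by
  rw [head_cons_mul x g h]; rfl

lemma head?_word_mul (i j : Fin 2) (b : Bool) (hij : i ≠ j) (g : FreeGroup (Fin 2))
    (h : g.toWord.head? ≠ some (i, !b)) :
    ((FreeGroup.mk [(i, b)] * FreeGroup.mk [(j, !b)] * FreeGroup.mk [(i, b)]) * g).toWord.head?
      = some (i, b) := by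
  rw [mul_assoc, mul_assoc]
  apply head?_cons_mul (i, b)
  rw [head?_cons_mul (j, !b) _ (by rw [head?_cons_mul (i, b) g h]; simpa using hij)]
  simpa using hij.symm

/-- `V₁ = a₁a₂⁻¹a₁` and `V₂ = a₂a₁⁻¹a₂` generate a free subgroup of rank 2 of the
free group on `{a₁, a₂}`: the homomorphism sending the free generators to `V₁, V₂`
is injective. -/
theorem V₁_V₂_free (V₁ V₂ : FreeGroup (Fin 2))
    (hV₁ : V₁ = FreeGroup.of 0 * (FreeGroup.of 1)⁻¹ * FreeGroup.of 0)
    (hV₂ : V₂ = FreeGroup.of 1 * (FreeGroup.of 0)⁻¹ * FreeGroup.of 1) :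
    Function.Injective
      ⇑(FreeGroup.lift (fun i : Fin 2 => if i = 0 then V₁ else V₂)) := by
  have hV₁' : V₁ = FreeGroup.mk [(0, true)] * FreeGroup.mk [(1, false)] * FreeGroup.mk [(0, true)] := by
    rw [hV₁]; rfl
  have hV₂' : V₂ = FreeGroup.mk [(1, true)] * FreeGroup.mk [(0, false)] * FreeGroup.mk [(1, true)] := by
    rw [hV₂]; rfl
  have hV₁inv : V₁⁻¹ = FreeGroup.mk [(0, false)] * FreeGroup.mk [(1, true)] * FreeGroup.mk [(0, false)] := by
    rw [hV₁', FreeGroup.mul_mk, FreeGroup.mul_mk, FreeGroup.inv_mk, FreeGroup.mul_mk,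
      FreeGroup.mul_mk]
    rfl
  have hV₂inv : V₂⁻¹ = FreeGroup.mk [(1, false)] * FreeGroup.mk [(0, true)] * FreeGroup.mk [(1, false)] := by
    rw [hV₂', FreeGroup.mul_mk, FreeGroup.mul_mk, FreeGroup.inv_mk, FreeGroup.mul_mk,
      FreeGroup.mul_mk]
    rfl
  let X : Fin 2 → Set (FreeGroup (Fin 2)) := fun i => {g | g.toWord.head? = some (i, true)}
  let Y : Fin 2 → Set (FreeGroup (Fin 2)) := fun i => {g | g.toWord.head? = some (i, false)}
  apply FreeGroup.injective_lift_of_ping_pong _ X Y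
  · intro i
    exact ⟨FreeGroup.of i, by simp [X, FreeGroup.toWord_of]⟩
  · intro i j hij
    show Disjoint (X i) (X j)
    rw [Set.disjoint_left]
    intro g hgi hgj
    exact hij (by have := hgi.symm.trans hgj; simpa [X] using this)
  · intro i j hij
    show Disjoint (Y i) (Y j)
    rw [Set.disjoint_left]
    intro g hgi hgj
    exact hij (by have := hgi.symm.trans hgj; simpa [Y] using this)
  · intro i j
    rw [Set.disjoint_left]
    intro g hgi hgj
    have := hgi.symm.trans hgj
    simp [X, Y] at this
  · intro i
    rintro x ⟨g, hg, rfl⟩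
    have hg' : g.toWord.head? ≠ some (i, false) := hg
    show ((if i = 0 then V₁ else V₂) * g).toWord.head? = some (i, true)
    rcases eq_or_ne i 0 with rfl | hi
    · rw [if_pos rfl, hV₁']
      exact head?_word_mul 0 1 true (by decide) g (by simpa using hg')
    · rw [if_neg hi, hV₂', Fin.eq_one_of_ne_zero i hi]
      rw [Fin.eq_one_of_ne_zero i hi] at hg'
      exact head?_word_mul 1 0 true (by decide) g (by simpa using hg')
  · intro i
    rintro x ⟨g, hg, rfl⟩
    have hg' : g.toWord.head? ≠ some (i, true) := hg
    show ((if i = 0 then V₁ else V₂)⁻¹ * g).toWord.head? = some (i, false)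
    rcases eq_or_ne i 0 with rfl | hi
    · rw [if_pos rfl, hV₁inv]
      exact head?_word_mul 0 1 false (by decide) g (by simpa using hg')
    · rw [if_neg hi, hV₂inv, Fin.eq_one_of_ne_zero i hi]
      rw [Fin.eq_one_of_ne_zero i hi] at hg'
      exact head?_word_mul 1 0 false (by decide) g (by simpa using hg')
end

section
/- Every nonempty cyclically reduced word in V₁^{±1}, V₂^{±1}, where V₁ = a₁a₂⁻¹a₁ and V₂ = a₂a₁⁻¹a₂ are elements of the free group on {a₁, a₂}, when written as a reduced word in a₁^{±1}, a₂^{±1}, contains no positive subword of length 3 and its inverse contains no positive subword of length 3 (i.e., it is not a regular word). -/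
/-- `V₁ = a₁a₂⁻¹a₁`, `V₂ = a₂a₁⁻¹a₂` as elements of the free group on two letters. -/
def Vgen : Fin 2 → FreeGroup (Fin 2) := fun i =>
  if i = 0 then FreeGroup.of 0 * (FreeGroup.of 1)⁻¹ * FreeGroup.of 0
  else FreeGroup.of 1 * (FreeGroup.of 0)⁻¹ * FreeGroup.of 1

namespace VAux

/-- The 3-letter block corresponding to `V_{p.1}^{±1}`. -/
def blk (p : Fin 2 × Bool) : List (Fin 2 × Bool) :=
  [(p.1, p.2), (1 - p.1, !p.2), (p.1, p.2)]

lemma f_eq_mk (p : Fin 2 × Bool) :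
    (if p.2 then Vgen p.1 else (Vgen p.1)⁻¹) = FreeGroup.mk (blk p) := by
  obtain ⟨i, b⟩ := p
  fin_cases i <;> cases b <;>
    simp [Vgen, blk, FreeGroup.of, FreeGroup.mul_mk, FreeGroup.inv_mk,
      FreeGroup.invRev] <;> decide

lemma prod_eq_mk (L : List (Fin 2 × Bool)) :
    (L.map (fun p : Fin 2 × Bool =>
      if p.2 then Vgen p.1 else (Vgen p.1)⁻¹)).prod = FreeGroup.mk (L.flatMap blk) := by
  induction L with
  | nil => rfl
  | cons p L ih =>
      rw [List.map_cons, List.prod_cons, ih, f_eq_mk, FreeGroup.mul_mk,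
        List.flatMap_cons]

lemma reduce_eq_self : ∀ (w : List (Fin 2 × Bool)),
    List.Chain' (fun p q : Fin 2 × Bool => ¬(p.1 = q.1 ∧ p.2 = !q.2)) w →
    FreeGroup.reduce w = w
  | [], _ => rfl
  | [x], _ => rfl
  | x :: y :: t, h => by
      have ht := (List.isChain_cons_cons.mp h).2
      have hxy := (List.isChain_cons_cons.mp h).1
      rw [FreeGroup.reduce.cons, reduce_eq_self (y :: t) ht]
      simp [hxy]

lemma chain'_bind (L : List (Fin 2 × Bool))
    (h : List.Chain' (fun p q : Fin 2 × Bool => ¬(p.1 = q.1 ∧ p.2 = !q.2)) L) :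
    List.Chain' (fun p q : Fin 2 × Bool => ¬(p.1 = q.1 ∧ p.2 = !q.2)) (L.flatMap blk) := by
  induction L with
  | nil => exact List.isChain_nil
  | cons p L ih =>
      have h1 := (List.isChain_cons.mp h).2
      rw [List.flatMap_cons, List.Chain', List.isChain_append]
      refine ⟨?_, ih h1, ?_⟩
      · have : p.1 ≠ 1 - p.1 := by fin_cases p <;> decide
        simp [blk, this, this.symm]
      · intro x hx y hy
        simp only [blk, List.getLast?] at hx
        cases L with
        | nil => simp at hy
        | cons q L' =>
            simp only [List.flatMap_cons, blk, List.head?] at hy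
            have hpq := (List.isChain_cons_cons.mp h).1
            simp at hx hy
            subst hx; subst hy
            simpa using hpq

lemma no_triple : ∀ (L u : List (Fin 2 × Bool)) (x y z : Fin 2 × Bool)
    (v : List (Fin 2 × Bool)), x.2 = y.2 → y.2 = z.2 →
    L.flatMap blk ≠ u ++ x :: y :: z :: v
  | [], u, x, y, z, v, _, _ => by simp
  | p :: L, u, x, y, z, v, hxy, hyz => by
      rw [List.flatMap_cons]
      match u with
      | [] =>
          intro h
          simp only [blk, List.cons_append, List.nil_append, List.cons.injEq] at h
          have : p.2 = !p.2 :=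
            (congrArg Prod.snd h.1).trans (hxy.trans (congrArg Prod.snd h.2.1).symm)
          simp at this
      | [a] =>
          intro h
          simp only [blk, List.cons_append, List.nil_append, List.cons.injEq] at h
          have : (!p.2) = p.2 :=
            (congrArg Prod.snd h.2.1).trans (hxy.trans (congrArg Prod.snd h.2.2.1).symm)
          simp at this
      | [a, b] =>
          intro h
          simp only [blk, List.cons_append, List.nil_append, List.cons.injEq] at h
          have hrest : L.flatMap blk = y :: z :: v := h.2.2.2
          cases L with
          | nil => simp at hrest
          | cons q L' =>
              simp only [List.flatMap_cons, blk, List.cons_append, List.cons.injEq] at hrest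
              have : q.2 = !q.2 :=
                (congrArg Prod.snd hrest.1).trans (hyz.trans (congrArg Prod.snd hrest.2.1).symm)
              simp at this
      | a :: b :: c :: u' =>
          intro h
          simp only [blk, List.cons_append, List.cons.injEq] at h
          exact no_triple L u' x y z v hxy hyz h.2.2.2

end VAux

/-- Every nonempty cyclically reduced word in `V₁^{±1}, V₂^{±1}`, written as a reduced
word in `a₁^{±1}, a₂^{±1}`, contains no positive subword of length 3, and its inverse
contains no positive subword of length 3 (i.e. it is not regular): the reduced word
contains neither three consecutive positive letters nor three consecutive inverse
letters. -/
theorem word_in_V_not_regular (L : List (Fin 2 × Bool)) (hne : L ≠ [])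
    (hred : List.Chain' (fun p q : Fin 2 × Bool => ¬(p.1 = q.1 ∧ p.2 = !q.2)) L)
    (hcyc : ∀ p q : Fin 2 × Bool, L.head? = some p → L.getLast? = some q →
      ¬(p.1 = q.1 ∧ p.2 = !q.2)) :
    (¬ ∃ (a b c : Fin 2) (w₁ w₂ : List (Fin 2 × Bool)),
        ((L.map (fun p : Fin 2 × Bool =>
          if p.2 then Vgen p.1 else (Vgen p.1)⁻¹)).prod).toWord =
          w₁ ++ [(a, true), (b, true), (c, true)] ++ w₂) ∧
      (¬ ∃ (a b c : Fin 2) (w₁ w₂ : List (Fin 2 × Bool)),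
        ((L.map (fun p : Fin 2 × Bool =>
          if p.2 then Vgen p.1 else (Vgen p.1)⁻¹)).prod).toWord =
          w₁ ++ [(a, false), (b, false), (c, false)] ++ w₂) := by
  have hw : ((L.map (fun p : Fin 2 × Bool =>
      if p.2 then Vgen p.1 else (Vgen p.1)⁻¹)).prod).toWord = L.flatMap VAux.blk := by
    rw [VAux.prod_eq_mk, FreeGroup.toWord_mk, VAux.reduce_eq_self _ (VAux.chain'_bind L hred)]
  constructor
  · rintro ⟨a, b, c, w₁, w₂, h⟩
    rw [hw] at h
    exact VAux.no_triple L w₁ (a, true) (b, true) (c, true) w₂ rfl rfl (by simpa using h)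
  · rintro ⟨a, b, c, w₁, w₂, h⟩
    rw [hw] at h
    exact VAux.no_triple L w₁ (a, false) (b, false) (c, false) w₂ rfl rfl (by simpa using h)
end
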